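/- arXiv:quant-ph/0703033 — 4 statements merged into one kernel-verified Lean document; each statement's English description precedes it below -/
import Mathlib

section
/- (Reverse direction of Lemma 1, bipartite form.) Let a, a' be invertible matrices on ℂ^{D₁} and b, b' invertible matrices on ℂ^{D₂}, and suppose a a' = c · a' a for a scalar c. If there exists a nonzero product vector ψ₁ ⊗ ψ₂ ∈ ℂ^{D₁} ⊗ ℂ^{D₂} with (a ⊗ b)(ψ₁ ⊗ ψ₂) = ψ₁ ⊗ ψ₂ and (a' ⊗ b')(ψ₁ ⊗ ψ₂) = ψ₁ ⊗ ψ₂, then c = 1, i.e. a and a' commute. -/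
open Matrix Kronecker

/-!
If `(a ⊗ b)(ψ₁ ⊗ ψ₂) = ψ₁ ⊗ ψ₂` with `ψ₁, ψ₂ ≠ 0`, then `(aψ₁) ⊗ (bψ₂) = ψ₁ ⊗ ψ₂` forces
`aψ₁ = λψ₁` with `λ ≠ 0`; likewise `a'ψ₁ = λ'ψ₁`. Applying `a a' = c · a' a` to the common
eigenvector `ψ₁` gives `λλ' = c λλ'`, so `c = 1`.
-/

variable {K l l' m m' : Type*}

theorem kronecker_mulVec_prod [CommSemiring K] [Fintype l'] [Fintype m']
    (A : Matrix l l' K) (B : Matrix m m' K) (u : l' → K) (v : m' → K) :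
    (A ⊗ₖ B) *ᵥ (fun p => u p.1 * v p.2) = fun p => (A *ᵥ u) p.1 * (B *ᵥ v) p.2 := by
  funext p
  simp only [mulVec, dotProduct, Fintype.sum_prod_type, kroneckerMap_apply, Finset.sum_mul_sum]
  exact Finset.sum_congr rfl fun _ _ => Finset.sum_congr rfl fun _ _ => by ring

theorem exists_ne_zero_smul_eq_of_prod_eq [Field K] {x u : l → K} {y v : m → K}
    (hu : u ≠ 0) (hv : v ≠ 0)
    (h : (fun p : l × m => x p.1 * y p.2) = fun p => u p.1 * v p.2) :
    ∃ μ : K, μ ≠ 0 ∧ x = μ • u := by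
  obtain ⟨j, hj⟩ := Function.ne_iff.mp hv
  have hprod : ∀ i, x i * y j = u i * v j := fun i => congrFun h (i, j)
  have hyj : y j ≠ 0 := by
    intro hy
    refine hu (funext fun i => ?_)
    exact (mul_eq_zero.mp ((hprod i).symm.trans (by rw [hy, mul_zero]))).resolve_right hj
  refine ⟨v j / y j, div_ne_zero hj hyj, funext fun i => ?_⟩
  rw [Pi.smul_apply, smul_eq_mul, div_mul_eq_mul_div, eq_div_iff hyj, hprod, mul_comm]

theorem eq_one_of_mul_eq_smul_mul_of_common_eigenvector [Field K] [Fintype l]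
    {A A' : Matrix l l K} {c μ μ' : K} {u : l → K}
    (hcomm : A * A' = c • (A' * A)) (hu : u ≠ 0) (hμ : μ ≠ 0) (hμ' : μ' ≠ 0)
    (hA : A *ᵥ u = μ • u) (hA' : A' *ᵥ u = μ' • u) : c = 1 := by
  have hsmul : (μ * μ') • u = (c * (μ * μ')) • u :=
    calc (μ * μ') • u = (A * A') *ᵥ u := by
          rw [← mulVec_mulVec, hA', mulVec_smul, hA, smul_smul, mul_comm]
      _ = c • ((A' * A) *ᵥ u) := by rw [hcomm, smul_mulVec]
      _ = (c * (μ * μ')) • u := by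
          rw [← mulVec_mulVec, hA, mulVec_smul, hA', smul_smul, smul_smul, mul_assoc]
  exact (mul_eq_right₀ (mul_ne_zero hμ hμ')).mp (smul_left_injective K hu hsmul).symm

theorem product_fixed_vector_forces_commutation_general (D1 D2 : ℕ)
    (a a' : Matrix (Fin D1) (Fin D1) ℂ) (b b' : Matrix (Fin D2) (Fin D2) ℂ)
    (c : ℂ) (hcomm : a * a' = c • (a' * a))
    (ψ1 : Fin D1 → ℂ) (ψ2 : Fin D2 → ℂ) (h1 : ψ1 ≠ 0) (h2 : ψ2 ≠ 0)
    (hfix : (a ⊗ₖ b).mulVec (fun p => ψ1 p.1 * ψ2 p.2) = fun p => ψ1 p.1 * ψ2 p.2)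
    (hfix' : (a' ⊗ₖ b').mulVec (fun p => ψ1 p.1 * ψ2 p.2) = fun p => ψ1 p.1 * ψ2 p.2) :
    c = 1 := by
  rw [kronecker_mulVec_prod] at hfix hfix'
  obtain ⟨μ, hμ, hψ1⟩ := exists_ne_zero_smul_eq_of_prod_eq h1 h2 hfix
  obtain ⟨μ', hμ', hψ1'⟩ := exists_ne_zero_smul_eq_of_prod_eq h1 h2 hfix'
  exact eq_one_of_mul_eq_smul_mul_of_common_eigenvector hcomm h1 hμ hμ' hψ1 hψ1'

/-- Reverse direction of Lemma 1, bipartite form: if `a a' = c · a' a` and some nonzero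
product vector `ψ₁ ⊗ ψ₂` is fixed by both `a ⊗ b` and `a' ⊗ b'` (with all four matrices
invertible), then `c = 1`, i.e. `a` and `a'` commute. -/
theorem product_fixed_vector_forces_commutation (D1 D2 : ℕ)
    (a a' : Matrix (Fin D1) (Fin D1) ℂ) (b b' : Matrix (Fin D2) (Fin D2) ℂ)
    (ha : IsUnit a) (ha' : IsUnit a') (hb : IsUnit b) (hb' : IsUnit b')
    (c : ℂ) (hcomm : a * a' = c • (a' * a))
    (ψ1 : Fin D1 → ℂ) (ψ2 : Fin D2 → ℂ) (h1 : ψ1 ≠ 0) (h2 : ψ2 ≠ 0)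
    (hfix : (a ⊗ₖ b).mulVec (fun p => ψ1 p.1 * ψ2 p.2) = fun p => ψ1 p.1 * ψ2 p.2)
    (hfix' : (a' ⊗ₖ b').mulVec (fun p => ψ1 p.1 * ψ2 p.2) = fun p => ψ1 p.1 * ψ2 p.2) :
    c = 1 :=
  product_fixed_vector_forces_commutation_general D1 D2 a a' b b' c hcomm ψ1 ψ2 h1 h2 hfix hfix'
end

section
/- The generalized Smolin state admits the closed-form Bell decomposition: for every n ≥ 2, (1/4^n)(I + X^{⊗2n})(I + Z^{⊗2n}) = (1/4^{n−1}) ∑ ⊗_{i=1}^{n} |Φ_{α_i β_i}⟩⟨Φ_{α_i β_i}|, where the sum ranges over all (α_1,…,α_n), (β_1,…,β_n) ∈ {0,1}^n satisfying α_1 ⊕ ⋯ ⊕ α_n = 0 and β_1 ⊕ ⋯ ⊕ β_n = 0 (⊕ addition modulo 2), and the i-th Bell projector acts on qubits 2i−1, 2i. -/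
open Matrix Kronecker

/-- The qubit Pauli `X = |0⟩⟨1| + |1⟩⟨0|`. -/
def qubitX : Matrix (Fin 2) (Fin 2) ℂ := !![0, 1; 1, 0]

/-- The qubit Pauli `Z = |0⟩⟨0| - |1⟩⟨1|`. -/
def qubitZ : Matrix (Fin 2) (Fin 2) ℂ := !![1, 0; 0, -1]

/-- The Bell states. -/
noncomputable def bell (α β : Fin 2) : Fin 2 × Fin 2 → ℂ := fun p =>
  ((Real.sqrt 2 : ℂ))⁻¹ *
    (if p = (0, α) then 1 else if p = (1, α + 1) then (-1 : ℂ) ^ (β : ℕ) else 0)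

/-- The Bell projector `|Φ_{αβ}⟩⟨Φ_{αβ}|`. -/
noncomputable def bellProj (α β : Fin 2) : Matrix (Fin 2 × Fin 2) (Fin 2 × Fin 2) ℂ :=
  vecMulVec (bell α β) (star (bell α β))

/-- The `2n`-fold tensor power `M^{⊗2n}` of a one-qubit matrix, acting on
`(ℂ²)^{⊗2n} ≅ ℂ^{Fin n → Fin 2 × Fin 2}` with qubits paired as `(2i-1, 2i)`. -/
def pairedTensorPow (n : ℕ) (M : Matrix (Fin 2) (Fin 2) ℂ) :
    Matrix (Fin n → Fin 2 × Fin 2) (Fin n → Fin 2 × Fin 2) ℂ :=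
  Matrix.of fun x y => ∏ i, (M ⊗ₖ M) (x i) (y i)

/-!
`Φ_{ab}` is the joint eigenvector of `Z ⊗ Z` and `X ⊗ X` with eigenvalues `(-1)^a` and `(-1)^b`,
so the signed sums `∑_{a,b} (-1)^{sa+tb} |Φ_{ab}⟩⟨Φ_{ab}|` are the four Pauli pairs
`(X ⊗ X)^t (Z ⊗ Z)^s`. Writing each parity constraint `⊕ α_i = 0` as the character average
`½ ∑_s (-1)^{s ∑ α_i}`, the constrained sum of tensor products factors pair by pair into
`¼ ∑_{s,t} ⊗_i (X ⊗ X)^t (Z ⊗ Z)^s = ¼ (1 + X^{⊗2n}) (1 + Z^{⊗2n})`.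
-/

namespace Matrix

variable {κ ι ι' ι'' R : Type*} [Fintype κ]

def piKronecker [CommMonoid R] (M : κ → Matrix ι ι' R) : Matrix (κ → ι) (κ → ι') R :=
  of fun x y => ∏ k, M k (x k) (y k)

variable [CommSemiring R]

theorem piKronecker_mul [DecidableEq κ] [Fintype ι'] (M : κ → Matrix ι ι' R)
    (N : κ → Matrix ι' ι'' R) :
    piKronecker M * piKronecker N = piKronecker fun k => M k * N k := by
  ext x y
  simp only [piKronecker, mul_apply, of_apply, ← Finset.prod_mul_distrib]
  exact (Fintype.prod_sum fun k j => M k (x k) j * N k j (y k)).symm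

theorem piKronecker_one [DecidableEq ι] : piKronecker (fun _ : κ => (1 : Matrix ι ι R)) = 1 := by
  ext x y
  by_cases h : x = y
  · subst h
    simp [piKronecker]
  · obtain ⟨k, hk⟩ := Function.ne_iff.mp h
    rw [one_apply_ne h]
    exact Finset.prod_eq_zero (Finset.mem_univ k) (one_apply_ne hk)

theorem piKronecker_smul (c : κ → R) (M : κ → Matrix ι ι' R) :
    piKronecker (fun k => c k • M k) = (∏ k, c k) • piKronecker M := by
  ext x y
  simp [piKronecker, Finset.prod_mul_distrib]

theorem sum_piKronecker {τ : Type*} [DecidableEq κ] [Fintype τ] (M : κ → τ → Matrix ι ι' R) :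
    ∑ f : κ → τ, piKronecker (fun k => M k (f k)) = piKronecker fun k => ∑ t, M k t := by
  ext x y
  simp only [piKronecker, sum_apply, of_apply]
  exact (Fintype.prod_sum fun k t => M k t (x k) (y k)).symm

theorem one_add_mul_one_add_piKronecker [DecidableEq κ] [Fintype ι] [DecidableEq ι]
    (A B : κ → Matrix ι ι R) :
    (1 + piKronecker A) * (1 + piKronecker B) =
      ∑ s : Fin 2, ∑ t : Fin 2, piKronecker fun k => A k ^ (t : ℕ) * B k ^ (s : ℕ) := by
  simp only [Fin.sum_univ_two, Fin.val_zero, Fin.val_one, pow_zero, pow_one, one_mul, mul_one,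
    ← piKronecker_mul, piKronecker_one, add_mul, mul_add]

theorem kronecker_pow {m n : Type*} [Fintype m] [Fintype n] [DecidableEq m] [DecidableEq n]
    (A : Matrix m m R) (B : Matrix n n R) (k : ℕ) : (A ⊗ₖ B) ^ k = (A ^ k) ⊗ₖ (B ^ k) := by
  induction k with
  | zero => simp only [pow_zero, one_kronecker_one]
  | succ k ih => rw [pow_succ, ih, ← mul_kronecker_mul, ← pow_succ, ← pow_succ]

end Matrix

theorem prod_neg_one_pow_val {R κ : Type*} [CommRing R] (s : Finset κ) (α : κ → Fin 2) :
    ∏ k ∈ s, (-1 : R) ^ (α k : ℕ) = (-1) ^ ((∑ k ∈ s, α k : Fin 2) : ℕ) := by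
  classical
  induction s using Finset.induction_on with
  | empty => simp
  | insert k s hk ih =>
    rw [Finset.prod_insert hk, Finset.sum_insert hk, ih, Fin.val_add, ← pow_add,
      neg_one_pow_eq_pow_mod_two (R := R) ((α k : ℕ) + _)]

theorem ite_sum_eq_zero_eq_inv_two_mul {K κ : Type*} [Field K] [NeZero (2 : K)] [Fintype κ]
    (α : κ → Fin 2) :
    (if ∑ k, α k = 0 then 1 else 0 : K) =
      2⁻¹ * ∑ s : Fin 2, ∏ k, (-1 : K) ^ ((s : ℕ) * (α k : ℕ)) := by
  simp only [Fin.sum_univ_two, Fin.val_zero, Fin.val_one, zero_mul, pow_zero,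
    Finset.prod_const_one, one_mul, prod_neg_one_pow_val]
  generalize ∑ k, α k = v
  fin_cases v
  · simp [← two_mul, inv_mul_cancel₀ (two_ne_zero' K)]
  · simp

theorem sum_ite_sum_eq_zero_piKronecker {K κ ι ι' : Type*} [Field K] [NeZero (2 : K)]
    [Fintype κ] [DecidableEq κ] (M : κ → Fin 2 → Matrix ι ι' K) :
    ∑ α : κ → Fin 2, (if ∑ k, α k = 0 then piKronecker (fun k => M k (α k)) else 0) =
      (2⁻¹ : K) • ∑ s : Fin 2,
        piKronecker fun k => ∑ a : Fin 2, (-1 : K) ^ ((s : ℕ) * (a : ℕ)) • M k a := by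
  have hα : ∀ α : κ → Fin 2, (if ∑ k, α k = 0 then piKronecker (fun k => M k (α k)) else 0) =
      (2⁻¹ : K) • ∑ s : Fin 2,
        piKronecker fun k => (-1 : K) ^ ((s : ℕ) * (α k : ℕ)) • M k (α k) := by
    intro α
    simp_rw [piKronecker_smul, ← Finset.sum_smul, smul_smul, ← ite_sum_eq_zero_eq_inv_two_mul,
      ite_smul, one_smul, zero_smul]
  simp_rw [hα, ← Finset.smul_sum, ← sum_piKronecker]
  rw [Finset.sum_comm]

theorem star_bell (a b : Fin 2) (p : Fin 2 × Fin 2) : star (bell a b p) = bell a b p := by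
  simp only [bell, star_mul', Complex.star_def, map_inv₀, Complex.conj_ofReal]
  split_ifs <;> simp

theorem sum_smul_bellProj (s t : Fin 2) :
    ∑ a : Fin 2, ∑ b : Fin 2,
        ((-1 : ℂ) ^ ((s : ℕ) * (a : ℕ)) * (-1) ^ ((t : ℕ) * (b : ℕ))) • bellProj a b =
      (qubitX ⊗ₖ qubitX) ^ (t : ℕ) * (qubitZ ⊗ₖ qubitZ) ^ (s : ℕ) := by
  rw [kronecker_pow, kronecker_pow, ← mul_kronecker_mul]
  ext ⟨i, j⟩ ⟨k, l⟩
  simp only [Matrix.sum_apply, Matrix.smul_apply, smul_eq_mul, bellProj, vecMulVec_apply,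
    Pi.star_apply, star_bell, kroneckerMap_apply]
  fin_cases s <;> fin_cases t <;> fin_cases i <;> fin_cases j <;> fin_cases k <;> fin_cases l <;>
    simp [Fin.sum_univ_two, bell, qubitX, qubitZ, Prod.ext_iff] <;> ring_nf <;>
    norm_num [← Complex.ofReal_pow]

theorem sum_parity_zero_piKronecker_bellProj (κ : Type*) [Fintype κ] [DecidableEq κ] :
    ∑ α : κ → Fin 2, ∑ β : κ → Fin 2,
      (if ∑ k, α k = 0 ∧ ∑ k, β k = 0 then piKronecker (fun k => bellProj (α k) (β k)) else 0) =
    (4⁻¹ : ℂ) • ((1 + piKronecker fun _ : κ => qubitX ⊗ₖ qubitX) *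
      (1 + piKronecker fun _ : κ => qubitZ ⊗ₖ qubitZ)) := by
  calc _ = ∑ α : κ → Fin 2, if ∑ k, α k = 0 then (2⁻¹ : ℂ) • ∑ t : Fin 2, piKronecker (fun k =>
          ∑ b : Fin 2, (-1 : ℂ) ^ ((t : ℕ) * (b : ℕ)) • bellProj (α k) b) else 0 := by
        refine Finset.sum_congr rfl fun α _ => ?_
        split_ifs with hα
        · simpa only [hα, true_and] using sum_ite_sum_eq_zero_piKronecker fun k => bellProj (α k)
        · simp only [hα, false_and, if_false, Finset.sum_const_zero]
    _ = (2⁻¹ : ℂ) • ∑ t : Fin 2, ∑ α : κ → Fin 2, if ∑ k, α k = 0 then piKronecker (fun k =>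
          ∑ b : Fin 2, (-1 : ℂ) ^ ((t : ℕ) * (b : ℕ)) • bellProj (α k) b) else 0 := by
        rw [Finset.sum_comm, Finset.smul_sum]
        refine Finset.sum_congr rfl fun α _ => ?_
        split_ifs <;> simp only [Finset.smul_sum, Finset.sum_const_zero, smul_zero]
    _ = (2⁻¹ : ℂ) • ∑ t : Fin 2, (2⁻¹ : ℂ) • ∑ s : Fin 2, piKronecker fun _ : κ =>
          ∑ a : Fin 2, ∑ b : Fin 2,
            ((-1 : ℂ) ^ ((s : ℕ) * (a : ℕ)) * (-1) ^ ((t : ℕ) * (b : ℕ))) • bellProj a b := by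
        congr! 2 with t
        rw [sum_ite_sum_eq_zero_piKronecker
          (fun _ a => ∑ b : Fin 2, (-1 : ℂ) ^ ((t : ℕ) * (b : ℕ)) • bellProj a b)]
        simp_rw [Finset.smul_sum, smul_smul]
    _ = _ := by
        simp_rw [sum_smul_bellProj, one_add_mul_one_add_piKronecker, Finset.smul_sum, smul_smul]
        rw [Finset.sum_comm]
        norm_num

/-- Closed-form Bell decomposition of the generalized Smolin state: for `n ≥ 2`,
`(1/4ⁿ)(I + X^{⊗2n})(I + Z^{⊗2n})
  = (1/4^{n-1}) ∑_{⊕α_i = ⊕β_i = 0} ⊗_{i=1}^n |Φ_{α_i β_i}⟩⟨Φ_{α_i β_i}|`,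
where the `i`-th Bell projector acts on qubits `2i-1, 2i`. -/
theorem generalized_smolin_bell_decomposition (n : ℕ) (hn : 2 ≤ n) :
    (1 / 4 ^ n : ℂ) • ((1 + pairedTensorPow n qubitX) * (1 + pairedTensorPow n qubitZ)) =
      (1 / 4 ^ (n - 1) : ℂ) •
        ∑ α : Fin n → Fin 2, ∑ β : Fin n → Fin 2,
          if (∑ i, α i) = 0 ∧ (∑ i, β i) = 0 then
            Matrix.of fun x y : Fin n → Fin 2 × Fin 2 =>
              ∏ i, bellProj (α i) (β i) (x i) (y i)
          else 0 := by
  rw [show (1 / 4 ^ n : ℂ) = 1 / 4 ^ (n - 1) * 4⁻¹ by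
      rw [← pow_sub_one_mul (by omega : n ≠ 0)]; ring,
    mul_smul]
  exact congrArg _ (sum_parity_zero_piKronecker_bellProj (Fin n)).symm
end

section
/- The generalized Smolin states satisfy the recursion: for every n ≥ 3, ρ^(2n) = (1/4) ∑_{α,β∈{0,1}} (σ_{αβ} ρ^(2n−2) σ_{αβ}†) ⊗ |Φ_{αβ}⟩⟨Φ_{αβ}|, where σ_{00} = I, σ_{01} = Z, σ_{10} = X, σ_{11} = XZ act on the first qubit (tensored with the identity on qubits 2,…,2n−2), and |Φ_{αβ}⟩⟨Φ_{αβ}| acts on qubits 2n−1, 2n. -/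
open Matrix Kronecker

/-- The `m`-fold tensor power `M^{⊗m}` of a one-qubit matrix, acting on
`(ℂ²)^{⊗m} ≅ ℂ^{Fin m → Fin 2}`. -/
def tensorPow (m : ℕ) (M : Matrix (Fin 2) (Fin 2) ℂ) :
    Matrix (Fin m → Fin 2) (Fin m → Fin 2) ℂ :=
  Matrix.of fun x y => ∏ i, M (x i) (y i)

/-- A one-qubit operator `σ` acting on the first of `m` qubits
(tensored with the identity on the remaining qubits). -/
def embFirst (m : ℕ) (h : 0 < m) (σ : Matrix (Fin 2) (Fin 2) ℂ) :
    Matrix (Fin m → Fin 2) (Fin m → Fin 2) ℂ :=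
  Matrix.of fun x y => σ (x ⟨0, h⟩) (y ⟨0, h⟩) *
    ∏ i ∈ Finset.univ.filter (· ≠ (⟨0, h⟩ : Fin m)), if x i = y i then (1 : ℂ) else 0

/- ### Auxiliary material -/

/-- The tensor product of `m` possibly different one-qubit matrices. -/
def mixedPow (m : ℕ) (f : Fin m → Matrix (Fin 2) (Fin 2) ℂ) :
    Matrix (Fin m → Fin 2) (Fin m → Fin 2) ℂ :=
  Matrix.of fun x y => ∏ i, f i (x i) (y i)

section auxlemmas
variable {m : ℕ}

lemma mixedPow_mul (f g : Fin m → Matrix (Fin 2) (Fin 2) ℂ) :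
    mixedPow m f * mixedPow m g = mixedPow m (fun i => f i * g i) := by
  ext x y
  simp only [mixedPow, Matrix.mul_apply, Matrix.of_apply, ← Finset.prod_mul_distrib]
  rw [Fintype.prod_sum]

lemma mixedPow_conjTranspose (f : Fin m → Matrix (Fin 2) (Fin 2) ℂ) :
    (mixedPow m f)ᴴ = mixedPow m (fun i => (f i)ᴴ) := by
  ext x y
  simp only [mixedPow, Matrix.conjTranspose_apply, Matrix.of_apply, star_prod]

lemma mixedPow_one : mixedPow m (fun _ => (1 : Matrix (Fin 2) (Fin 2) ℂ)) = 1 := by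
  ext x y
  simp only [mixedPow, Matrix.of_apply, Matrix.one_apply, Finset.prod_boole]
  simp [funext_iff]

lemma tensorPow_eq (M : Matrix (Fin 2) (Fin 2) ℂ) :
    tensorPow m M = mixedPow m (fun _ => M) := rfl

lemma tensorPow_one : tensorPow m (1 : Matrix (Fin 2) (Fin 2) ℂ) = 1 := by
  rw [tensorPow_eq, mixedPow_one]

lemma tensorPow_mul (M N : Matrix (Fin 2) (Fin 2) ℂ) :
    tensorPow m M * tensorPow m N = tensorPow m (M * N) := by
  rw [tensorPow_eq, tensorPow_eq, mixedPow_mul, tensorPow_eq]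

lemma embFirst_eq (h : 0 < m) (σ : Matrix (Fin 2) (Fin 2) ℂ) :
    embFirst m h σ = mixedPow m (Function.update (fun _ => 1) ⟨0, h⟩ σ) := by
  ext x y
  simp only [embFirst, mixedPow, Matrix.of_apply]
  rw [Finset.filter_ne', ← Finset.mul_prod_erase Finset.univ _ (Finset.mem_univ (⟨0, h⟩ : Fin m))]
  rw [Function.update_self]
  congr 1
  refine Finset.prod_congr rfl fun i hi => ?_
  rw [Function.update_of_ne (Finset.ne_of_mem_erase hi)]
  simp [Matrix.one_apply]

lemma mixedPow_update_smul (f : Fin m → Matrix (Fin 2) (Fin 2) ℂ) (j : Fin m) (c : ℂ) :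
    mixedPow m (Function.update f j (c • f j)) = c • mixedPow m f := by
  ext x y
  have : (fun i => (Function.update f j (c • f j)) i (x i) (y i))
      = Function.update (fun i => f i (x i) (y i)) j (c * f j (x j) (y j)) := by
    funext i
    by_cases hij : i = j
    · subst hij; simp
    · simp [Function.update_of_ne hij]
  simp only [mixedPow, Matrix.of_apply, Matrix.smul_apply, this]
  rw [Finset.prod_update_of_mem (Finset.mem_univ j)]
  rw [← Finset.mul_prod_erase Finset.univ _ (Finset.mem_univ j), smul_eq_mul,
    Finset.sdiff_singleton_eq_erase, mul_assoc]

/-- Conjugating a tensor power by a one-qubit operator on the first qubit. -/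
lemma conj_tensorPow (h : 0 < m) (σ M : Matrix (Fin 2) (Fin 2) ℂ) (c : ℂ)
    (hσ : σ * M * σᴴ = c • M) :
    embFirst m h σ * tensorPow m M * (embFirst m h σ)ᴴ = c • tensorPow m M := by
  rw [embFirst_eq, tensorPow_eq, mixedPow_conjTranspose, mixedPow_mul, mixedPow_mul]
  have key : (fun i => Function.update (fun _ => (1:Matrix (Fin 2) (Fin 2) ℂ)) (⟨0, h⟩ : Fin m) σ i * M *
      (Function.update (fun _ => (1:Matrix (Fin 2) (Fin 2) ℂ)) (⟨0, h⟩ : Fin m) σ i)ᴴ)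
      = Function.update (fun _ => M) (⟨0, h⟩ : Fin m) (c • M) := by
    funext i
    by_cases hij : i = (⟨0, h⟩ : Fin m)
    · subst hij; simp [hσ]
    · simp [Function.update_of_ne hij]
  rw [key, mixedPow_update_smul (fun _ => M) ⟨0, h⟩ c]

/- ### One-qubit Pauli conjugation identities -/

lemma sigma_conj_X (α β : Fin 2) :
    (qubitX ^ (α : ℕ) * qubitZ ^ (β : ℕ)) * qubitX * (qubitX ^ (α : ℕ) * qubitZ ^ (β : ℕ))ᴴ
      = ((-1 : ℂ) ^ (β : ℕ)) • qubitX := by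
  fin_cases α <;> fin_cases β <;>
    · ext i j
      fin_cases i <;> fin_cases j <;>
        simp [qubitX, qubitZ, Matrix.mul_apply, Fin.sum_univ_two, Matrix.conjTranspose_apply]

lemma sigma_conj_Z (α β : Fin 2) :
    (qubitX ^ (α : ℕ) * qubitZ ^ (β : ℕ)) * qubitZ * (qubitX ^ (α : ℕ) * qubitZ ^ (β : ℕ))ᴴ
      = ((-1 : ℂ) ^ (α : ℕ)) • qubitZ := by
  fin_cases α <;> fin_cases β <;>
    · ext i j
      fin_cases i <;> fin_cases j <;>
        simp [qubitX, qubitZ, Matrix.mul_apply, Fin.sum_univ_two, Matrix.conjTranspose_apply]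

lemma sigma_conj_XZ (α β : Fin 2) :
    (qubitX ^ (α : ℕ) * qubitZ ^ (β : ℕ)) * (qubitX * qubitZ) *
        (qubitX ^ (α : ℕ) * qubitZ ^ (β : ℕ))ᴴ
      = ((-1 : ℂ) ^ ((α : ℕ) + (β : ℕ))) • (qubitX * qubitZ) := by
  fin_cases α <;> fin_cases β <;>
    · ext i j
      fin_cases i <;> fin_cases j <;>
        simp [qubitX, qubitZ, Matrix.mul_apply, Fin.sum_univ_two, Matrix.conjTranspose_apply]

lemma sigma_conj_one (α β : Fin 2) :
    (qubitX ^ (α : ℕ) * qubitZ ^ (β : ℕ)) * 1 * (qubitX ^ (α : ℕ) * qubitZ ^ (β : ℕ))ᴴ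
      = ((1 : ℂ)) • (1 : Matrix (Fin 2) (Fin 2) ℂ) := by
  fin_cases α <;> fin_cases β <;>
    · ext i j
      fin_cases i <;> fin_cases j <;>
        simp [qubitX, qubitZ, Matrix.mul_apply, Fin.sum_univ_two, Matrix.conjTranspose_apply,
          Matrix.one_apply]

/- ### Bell projector expansion -/

lemma bell_star (α β : Fin 2) : star (bell α β) = bell α β := by
  funext p
  simp only [Pi.star_apply, bell, star_mul', RCLike.star_def, map_inv₀, Complex.conj_ofReal]
  congr 1
  split_ifs <;> simp

lemma XZ_mul : qubitX * qubitZ = !![0, -1; 1, 0] := by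
  ext i j
  fin_cases i <;> fin_cases j <;>
    simp [qubitX, qubitZ, Matrix.mul_apply, Fin.sum_univ_two]

lemma bellProj_eq (α β : Fin 2) :
    bellProj α β = (1 / 4 : ℂ) •
      ((1 : Matrix (Fin 2 × Fin 2) (Fin 2 × Fin 2) ℂ)
        + ((-1 : ℂ) ^ (β : ℕ)) • (qubitX ⊗ₖ qubitX)
        + ((-1 : ℂ) ^ (α : ℕ)) • (qubitZ ⊗ₖ qubitZ)
        + ((-1 : ℂ) ^ ((α : ℕ) + (β : ℕ))) • ((qubitX ⊗ₖ qubitX) * (qubitZ ⊗ₖ qubitZ))) := by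
  have h2 : ((Real.sqrt 2 : ℝ) : ℂ)⁻¹ * ((Real.sqrt 2 : ℝ) : ℂ)⁻¹ = 1 / 2 := by
    rw [← mul_inv, ← Complex.ofReal_mul, Real.mul_self_sqrt (by norm_num)]
    norm_num
  rw [← Matrix.mul_kronecker_mul, XZ_mul]
  unfold bellProj
  rw [bell_star]
  fin_cases α <;> fin_cases β <;>
    · ext ⟨i, j⟩ ⟨k, l⟩
      fin_cases i <;> fin_cases j <;> fin_cases k <;> fin_cases l <;>
        · simp only [bell, vecMulVec_apply, Matrix.kroneckerMap_apply, Matrix.one_apply,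
            Matrix.smul_apply, Matrix.add_apply, qubitX, qubitZ, Fin.isValue,
            Matrix.cons_val', Matrix.cons_val_zero, Matrix.cons_val_one, Matrix.head_cons,
            Matrix.head_fin_const, Matrix.empty_val', Matrix.cons_val_fin_one, smul_eq_mul]
          norm_num [Prod.ext_iff, h2, show ((2:Fin 2) = 0) by decide] <;>
            simp_all [show ((0:Fin 2) = 2) by decide]

end auxlemmas

/-- Recursion for the generalized Smolin states: for `n ≥ 3`,
`ρ^{(2n)} = (1/4) ∑_{α,β} (σ_{αβ} ρ^{(2n-2)} σ_{αβ}†) ⊗ |Φ_{αβ}⟩⟨Φ_{αβ}|`,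
where `σ_{αβ} = X^α Z^β` acts on the first qubit and the Bell projector acts on
qubits `2n-1, 2n`. -/
theorem generalized_smolin_recursion (n : ℕ) (hn : 3 ≤ n)
    (ρsmall : Matrix (Fin (2 * n - 2) → Fin 2) (Fin (2 * n - 2) → Fin 2) ℂ)
    (hsmall : ρsmall = (1 / 4 ^ (n - 1) : ℂ) •
        ((1 + tensorPow (2 * n - 2) qubitX) * (1 + tensorPow (2 * n - 2) qubitZ)))
    (ρbig : Matrix ((Fin (2 * n - 2) → Fin 2) × (Fin 2 × Fin 2))
        ((Fin (2 * n - 2) → Fin 2) × (Fin 2 × Fin 2)) ℂ)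
    (hbig : ρbig = (1 / 4 ^ n : ℂ) •
        ((1 + tensorPow (2 * n - 2) qubitX ⊗ₖ (qubitX ⊗ₖ qubitX)) *
          (1 + tensorPow (2 * n - 2) qubitZ ⊗ₖ (qubitZ ⊗ₖ qubitZ)))) :
    ρbig = (1 / 4 : ℂ) • ∑ α : Fin 2, ∑ β : Fin 2,
      (embFirst (2 * n - 2) (by omega) (qubitX ^ (α : ℕ) * qubitZ ^ (β : ℕ)) * ρsmall *
          (embFirst (2 * n - 2) (by omega) (qubitX ^ (α : ℕ) * qubitZ ^ (β : ℕ)))ᴴ) ⊗ₖ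
        bellProj α β := by
  have hm : 0 < 2 * n - 2 := by omega
  have h4 : (1 / 4 ^ n : ℂ) = (1 / 4) * (1 / 4 ^ (n - 1)) := by
    rw [div_mul_div_comm, one_mul, ← pow_succ']
    congr 2
    omega
  have hrs : ∀ α β : Fin 2,
      embFirst (2 * n - 2) hm (qubitX ^ (α : ℕ) * qubitZ ^ (β : ℕ)) * ρsmall *
          (embFirst (2 * n - 2) hm (qubitX ^ (α : ℕ) * qubitZ ^ (β : ℕ)))ᴴ
        = (1 / 4 ^ (n - 1) : ℂ) •
          ((1 : Matrix (Fin (2 * n - 2) → Fin 2) (Fin (2 * n - 2) → Fin 2) ℂ)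
            + ((-1 : ℂ) ^ (β : ℕ)) • tensorPow (2 * n - 2) qubitX
            + ((-1 : ℂ) ^ (α : ℕ)) • tensorPow (2 * n - 2) qubitZ
            + ((-1 : ℂ) ^ ((α : ℕ) + (β : ℕ))) •
                (tensorPow (2 * n - 2) qubitX * tensorPow (2 * n - 2) qubitZ)) := by
    intro α β
    rw [hsmall]
    rw [Matrix.mul_smul, Matrix.smul_mul]
    congr 1
    simp only [mul_add, add_mul, one_mul, mul_one, tensorPow_mul]
    rw [show embFirst (2 * n - 2) hm (qubitX ^ (α : ℕ) * qubitZ ^ (β : ℕ)) *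
          (embFirst (2 * n - 2) hm (qubitX ^ (α : ℕ) * qubitZ ^ (β : ℕ)))ᴴ
        = embFirst (2 * n - 2) hm (qubitX ^ (α : ℕ) * qubitZ ^ (β : ℕ)) *
          tensorPow (2 * n - 2) 1 *
          (embFirst (2 * n - 2) hm (qubitX ^ (α : ℕ) * qubitZ ^ (β : ℕ)))ᴴ from by
        rw [tensorPow_one, Matrix.mul_one]]
    rw [conj_tensorPow hm _ _ _ (sigma_conj_one α β),
      conj_tensorPow hm _ _ _ (sigma_conj_X α β),
      conj_tensorPow hm _ _ _ (sigma_conj_Z α β),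
      conj_tensorPow hm _ _ _ (sigma_conj_XZ α β)]
    rw [tensorPow_one, one_smul, ← tensorPow_mul]
    abel
  rw [hbig, h4]
  simp only [hrs, bellProj_eq, Fin.sum_univ_two, Fin.val_zero, Fin.val_one, pow_zero, pow_one,
    Nat.add_zero, Nat.zero_add, one_smul]
  simp only [Matrix.add_kronecker, Matrix.kronecker_add, Matrix.smul_kronecker,
    Matrix.kronecker_smul, Matrix.one_kronecker_one, Matrix.mul_kronecker_mul]
  simp only [mul_add, add_mul, mul_one, one_mul]
  module
end

section
/- For every n ≥ 2, the generalized Smolin state is invariant under arbitrary permutations of the 2n qubits: for every permutation π of {1,…,2n}, U_π ρ^(2n) U_π† = ρ^(2n), where U_π is the unitary on (ℂ²)^{⊗2n} permuting the tensor factors according to π. -/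
open Matrix

/-- The permutation unitary `U_π` on `(ℂ²)^{⊗m}`:
`U_π (v_1 ⊗ ⋯ ⊗ v_m) = v_{π⁻¹(1)} ⊗ ⋯ ⊗ v_{π⁻¹(m)}`, i.e. `U_π e_f = e_{f ∘ π⁻¹}`. -/
def permUnitary (m : ℕ) (π : Equiv.Perm (Fin m)) :
    Matrix (Fin m → Fin 2) (Fin m → Fin 2) ℂ :=
  Matrix.of fun x y => if y = x ∘ π then 1 else 0

lemma permUnitary_mul {m : ℕ} (π : Equiv.Perm (Fin m))
    (A : Matrix (Fin m → Fin 2) (Fin m → Fin 2) ℂ) (x y : Fin m → Fin 2) :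
    (permUnitary m π * A) x y = A (x ∘ π) y := by
  simp [mul_apply, permUnitary, ite_mul, Finset.sum_ite_eq']

lemma mul_permUnitary {m : ℕ} (π : Equiv.Perm (Fin m))
    (A : Matrix (Fin m → Fin 2) (Fin m → Fin 2) ℂ) (x y : Fin m → Fin 2) :
    (A * permUnitary m π) x y = A x (y ∘ π.symm) := by
  simp only [mul_apply, permUnitary, Matrix.of_apply, mul_ite, mul_one, mul_zero]
  rw [Finset.sum_eq_single (y ∘ π.symm)]
  · rw [if_pos]; funext i; simp
  · intro b _ hb
    rw [if_neg]
    intro hc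
    apply hb
    funext i
    have := congrFun hc (π.symm i)
    simpa using this.symm
  · simp

lemma permUnitary_mul_conjTranspose (m : ℕ) (π : Equiv.Perm (Fin m)) :
    permUnitary m π * (permUnitary m π)ᴴ = 1 := by
  ext x y
  rw [permUnitary_mul]
  simp only [conjTranspose_apply, permUnitary, Matrix.of_apply, Matrix.one_apply]
  by_cases h : x = y
  · subst h; simp
  · have hc : ¬ x ∘ ⇑π = y ∘ ⇑π := by
      intro hc
      apply h
      funext i
      have := congrFun hc (π.symm i)
      simpa using this
    simp [h, hc]

lemma permUnitary_comm (m : ℕ) (M : Matrix (Fin 2) (Fin 2) ℂ) (π : Equiv.Perm (Fin m)) :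
    permUnitary m π * tensorPow m M = tensorPow m M * permUnitary m π := by
  ext x y
  rw [permUnitary_mul, mul_permUnitary]
  simp only [tensorPow, Matrix.of_apply, Function.comp]
  exact (Equiv.prod_comp π.symm (fun j => M (x (π j)) (y j))).symm.trans
    (Finset.prod_congr rfl (fun i _ => by simp))

/-- For every `n ≥ 2`, the generalized Smolin state
`ρ^{(2n)} = (1/4ⁿ)(I + X^{⊗2n})(I + Z^{⊗2n})` is invariant under arbitrary
permutations of the `2n` qubits. -/
theorem generalized_smolin_permutation_invariant (n : ℕ) (hn : 2 ≤ n)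
    (π : Equiv.Perm (Fin (2 * n)))
    (ρ : Matrix (Fin (2 * n) → Fin 2) (Fin (2 * n) → Fin 2) ℂ)
    (hρ : ρ = (1 / 4 ^ n : ℂ) •
        ((1 + tensorPow (2 * n) qubitX) * (1 + tensorPow (2 * n) qubitZ))) :
    permUnitary (2 * n) π * ρ * (permUnitary (2 * n) π)ᴴ = ρ := by
  subst hρ
  set U := permUnitary (2 * n) π
  have hU : U * Uᴴ = 1 := permUnitary_mul_conjTranspose _ _
  have h1 : U * (1 + tensorPow (2 * n) qubitX) = (1 + tensorPow (2 * n) qubitX) * U := by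
    rw [mul_add, add_mul, mul_one, one_mul, permUnitary_comm]
  have h2 : U * (1 + tensorPow (2 * n) qubitZ) = (1 + tensorPow (2 * n) qubitZ) * U := by
    rw [mul_add, add_mul, mul_one, one_mul, permUnitary_comm]
  rw [Matrix.mul_smul, Matrix.smul_mul, ← mul_assoc, h1, mul_assoc _ U, h2,
    ← mul_assoc, mul_assoc _ U, hU, mul_one]
end
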